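/- arXiv:2411.15861 — 2 statements merged into one kernel-verified Lean document; each statement's English description precedes it below -/
import Mathlib

section
/- For n ≥ 2, Var(s_1 s_2) = n(n−2)/(n−1)² − (1/(n−1))·Var(s_1²). -/
/-- Expectation of a real statistic of a uniformly distributed random permutation of
`{1,…,n}`: the average over the symmetric group. -/
noncomputable def permExp (n : ℕ) (f : Equiv.Perm (Fin n) → ℝ) : ℝ :=
  (∑ σ : Equiv.Perm (Fin n), f σ) / (Nat.factorial n : ℝ)

/-- Covariance of two real statistics of a uniform random permutation of `{1,…,n}`. -/
noncomputable def permCov (n : ℕ) (f g : Equiv.Perm (Fin n) → ℝ) : ℝ :=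
  permExp n fun σ => (f σ - permExp n f) * (g σ - permExp n g)

/-- Variance of a real statistic of a uniform random permutation of `{1,…,n}`. -/
noncomputable def permVar (n : ℕ) (f : Equiv.Perm (Fin n) → ℝ) : ℝ :=
  permCov n f f

/-- The standardized rank vector: `s i = √(12/(n²−1)) · (σ(i) − (n+1)/2)`, where the rank
`σ(i) ∈ {1,…,n}` is realized as `(σ i) + 1` for `σ i : Fin n`. -/
noncomputable def srv (n : ℕ) (σ : Equiv.Perm (Fin n)) (i : Fin n) : ℝ :=
  Real.sqrt (12 / ((n : ℝ) ^ 2 - 1)) * (((σ i : ℕ) : ℝ) + 1 - ((n : ℝ) + 1) / 2)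

set_option maxHeartbeats 1000000

section aux

lemma sum_perm_single (m : ℕ) (F : Fin (m+1) → ℝ) :
    ∑ σ : Equiv.Perm (Fin (m+1)), F (σ 0) = (Nat.factorial m : ℝ) * ∑ a, F a := by
  rw [← Equiv.sum_comp Equiv.Perm.decomposeFin.symm (fun σ => F (σ 0))]
  rw [Fintype.sum_prod_type]
  simp only [Equiv.Perm.decomposeFin_symm_apply_zero, Finset.sum_const, Fintype.card_perm,
    Fintype.card_fin, nsmul_eq_mul, Finset.card_univ, ← Finset.mul_sum]

lemma sum_perm_pair (m : ℕ) (F : Fin (m+2) → Fin (m+2) → ℝ) :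
    ∑ σ : Equiv.Perm (Fin (m+2)), F (σ 0) (σ 1)
      = (Nat.factorial m : ℝ) * ∑ a, ∑ k ∈ Finset.univ \ {a}, F a k := by
  rw [← Equiv.sum_comp Equiv.Perm.decomposeFin.symm (fun σ => F (σ 0) (σ 1))]
  rw [Fintype.sum_prod_type]
  simp only [Equiv.Perm.decomposeFin_symm_apply_zero, Equiv.Perm.decomposeFin_symm_apply_one]
  rw [Finset.mul_sum]
  refine Finset.sum_congr rfl fun a _ => ?_
  rw [sum_perm_single m (fun b => F a (Equiv.swap 0 a b.succ))]
  congr 1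
  refine Finset.sum_bij (fun b _ => Equiv.swap 0 a b.succ) ?_ ?_ ?_ ?_
  · intro b _
    simp only [Finset.mem_sdiff, Finset.mem_univ, Finset.mem_singleton, true_and]
    intro h
    have : b.succ = (0 : Fin (m+2)) :=
      (Equiv.swap 0 a).injective (by rw [h, Equiv.swap_apply_left])
    exact Fin.succ_ne_zero b this
  · intro b _ b' _ h
    have := (Equiv.swap 0 a).injective h
    exact Fin.succ_injective _ this
  · intro k hk
    simp only [Finset.mem_sdiff, Finset.mem_univ, Finset.mem_singleton, true_and] at hk
    have h0 : Equiv.swap 0 a k ≠ 0 := by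
      intro h
      apply hk
      have := (Equiv.swap 0 a).injective (a₁ := k) (a₂ := a)
      apply this
      rw [h, Equiv.swap_apply_right]
    obtain ⟨b, hb⟩ := Fin.exists_succ_eq.2 h0
    exact ⟨b, Finset.mem_univ b, by
      show Equiv.swap 0 a b.succ = k; rw [hb, Equiv.swap_apply_self]⟩
  · intros; rfl

lemma pair_sum_eval (m : ℕ) (g h : Fin (m+2) → ℝ) :
    ∑ σ : Equiv.Perm (Fin (m+2)), g (σ 0) * h (σ 1)
      = (Nat.factorial m : ℝ) * ((∑ a, g a) * (∑ k, h k) - ∑ a, g a * h a) := by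
  rw [sum_perm_pair m (fun a k => g a * h k)]
  congr 1
  have e : ∀ a : Fin (m+2), ∑ k ∈ Finset.univ \ {a}, g a * h k
      = g a * (∑ k, h k) - g a * h a := by
    intro a
    rw [Finset.sum_sdiff_eq_sub (Finset.singleton_subset_iff.2 (Finset.mem_univ a)),
      Finset.sum_singleton, ← Finset.mul_sum]
  rw [Finset.sum_congr rfl fun a _ => e a, Finset.sum_sub_distrib, ← Finset.sum_mul]

lemma sum_range_cast (n : ℕ) : ∑ i ∈ Finset.range n, (i:ℝ) = n*(n-1)/2 := by
  induction n with
  | zero => simp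
  | succ k ih => rw [Finset.sum_range_succ, ih]; push_cast; ring

lemma sum_range_sq_cast (n : ℕ) : ∑ i ∈ Finset.range n, (i:ℝ)^2 = n*(n-1)*(2*n-1)/6 := by
  induction n with
  | zero => simp
  | succ k ih => rw [Finset.sum_range_succ, ih]; push_cast; ring

lemma sum_v_zero (n : ℕ) :
    ∑ k : Fin n, (((k:ℕ):ℝ) + 1 - ((n:ℝ)+1)/2) = 0 := by
  simp only [Finset.sum_sub_distrib, Finset.sum_add_distrib, Finset.sum_const,
    Finset.card_univ, Fintype.card_fin, nsmul_eq_mul]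
  rw [Fin.sum_univ_eq_sum_range (fun i => (i:ℝ)), sum_range_cast]
  rcases n with _ | k
  · simp
  · push_cast; ring

lemma sum_v_sq (n : ℕ) (hn : 1 ≤ n) :
    ∑ k : Fin n, (((k:ℕ):ℝ) + 1 - ((n:ℝ)+1)/2)^2 = n*((n:ℝ)^2-1)/12 := by
  have e : ∀ k : Fin n, (((k:ℕ):ℝ) + 1 - ((n:ℝ)+1)/2)^2
      = ((k:ℕ):ℝ)^2 + (2 - ((n:ℝ)+1))*((k:ℕ):ℝ) + (1 - ((n:ℝ)+1)/2)^2 := by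
    intro k; ring
  rw [Finset.sum_congr rfl fun k _ => e k]
  simp only [Finset.sum_add_distrib, Finset.sum_const, Finset.card_univ, Fintype.card_fin,
    nsmul_eq_mul, ← Finset.mul_sum]
  rw [Fin.sum_univ_eq_sum_range (fun i => (i:ℝ)^2), Fin.sum_univ_eq_sum_range (fun i => (i:ℝ)),
    sum_range_sq_cast, sum_range_cast]
  rcases n with _ | k
  · omega
  · push_cast; ring

lemma permVar_eq (n : ℕ) (f : Equiv.Perm (Fin n) → ℝ) :
    permVar n f = permExp n (fun σ => f σ^2) - (permExp n f)^2 := by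
  have hfac : (Nat.factorial n : ℝ) ≠ 0 := Nat.cast_ne_zero.2 (Nat.factorial_ne_zero n)
  have hcard : (Finset.univ : Finset (Equiv.Perm (Fin n))).card = Nat.factorial n := by
    rw [Finset.card_univ, Fintype.card_perm, Fintype.card_fin]
  unfold permVar permCov permExp
  set μ := (∑ σ : Equiv.Perm (Fin n), f σ) / (Nat.factorial n : ℝ) with hμ
  have e : ∀ σ : Equiv.Perm (Fin n), (f σ - μ) * (f σ - μ) = f σ^2 - 2*μ*f σ + μ^2 := by
    intro σ; ring
  rw [Finset.sum_congr rfl fun σ _ => e σ]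
  simp only [Finset.sum_add_distrib, Finset.sum_sub_distrib, Finset.sum_const, hcard,
    nsmul_eq_mul, ← Finset.mul_sum]
  rw [hμ]
  field_simp
  ring

end aux

/-- For `n ≥ 2`, `Var(s₁s₂) = n(n−2)/(n−1)² − Var(s₁²)/(n−1)`. -/
theorem var_srv_prod (n : ℕ) (hn : 2 ≤ n) :
    permVar n (fun σ => srv n σ ⟨0, by omega⟩ * srv n σ ⟨1, by omega⟩)
      = (n : ℝ) * ((n : ℝ) - 2) / ((n : ℝ) - 1) ^ 2
        - (1 / ((n : ℝ) - 1)) * permVar n (fun σ => (srv n σ ⟨0, by omega⟩) ^ 2) := by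
  obtain ⟨m, rfl⟩ : ∃ m, n = m + 2 := ⟨n - 2, by omega⟩
  set w : Fin (m+2) → ℝ := fun k =>
    Real.sqrt (12 / (((m+2 : ℕ) : ℝ) ^ 2 - 1)) * (((k:ℕ):ℝ) + 1 - (((m+2:ℕ):ℝ) + 1) / 2)
    with hw
  have hsrv : ∀ (σ : Equiv.Perm (Fin (m+2))) (i : Fin (m+2)), srv (m+2) σ i = w (σ i) :=
    fun σ i => rfl
  have hidx0 : ∀ (σ : Equiv.Perm (Fin (m+2))), σ ⟨0, by omega⟩ = σ 0 := fun σ => rfl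
  have hidx1 : ∀ (σ : Equiv.Perm (Fin (m+2))), σ ⟨1, by omega⟩ = σ 1 := fun σ => rfl
  -- basic numeric facts
  have hK2 : (2:ℝ) ≤ ((m+2:ℕ):ℝ) := by push_cast; linarith [Nat.cast_nonneg (α := ℝ) m]
  have hKne : ((m+2:ℕ):ℝ) ≠ 0 := by positivity
  have hK1ne : ((m+2:ℕ):ℝ) - 1 ≠ 0 := by push_cast; push_cast at hK2; linarith
  have hden : ((m+2:ℕ):ℝ)^2 - 1 ≠ 0 := by nlinarith
  have hdenpos : (0:ℝ) ≤ 12 / (((m+2:ℕ):ℝ)^2 - 1) := by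
    apply div_nonneg (by norm_num)
    nlinarith
  have hwsq : ∀ k, w k ^ 2
      = (12 / (((m+2:ℕ):ℝ)^2 - 1)) * (((k:ℕ):ℝ) + 1 - (((m+2:ℕ):ℝ) + 1) / 2)^2 := by
    intro k
    rw [hw]
    rw [mul_pow, Real.sq_sqrt hdenpos]
  -- sums of w
  have hsw : ∑ k : Fin (m+2), w k = 0 := by
    rw [hw, ← Finset.mul_sum, sum_v_zero (m+2), mul_zero]
  have hW2 : ∑ k : Fin (m+2), w k ^ 2 = ((m+2:ℕ):ℝ) := by
    rw [Finset.sum_congr rfl fun k _ => hwsq k, ← Finset.mul_sum, sum_v_sq (m+2) (by omega)]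
    have gen : ∀ (K D : ℝ), D ≠ 0 → 12 / D * (K * D / 12) = K := by
      intro K D hD; field_simp
    exact gen _ _ hden
  set W4 : ℝ := ∑ k : Fin (m+2), w k ^ 4 with hW4
  -- factorials
  have hfm : ((Nat.factorial m : ℕ):ℝ) ≠ 0 := Nat.cast_ne_zero.2 (Nat.factorial_ne_zero m)
  have hf2 : ((Nat.factorial (m+2) : ℕ):ℝ)
      = ((m+2:ℕ):ℝ) * (((m+2:ℕ):ℝ) - 1) * (Nat.factorial m : ℝ) := by
    rw [Nat.factorial_succ, Nat.factorial_succ]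
    push_cast
    ring
  have hf1 : ((Nat.factorial (m+1) : ℕ):ℝ) = (((m+2:ℕ):ℝ) - 1) * (Nat.factorial m : ℝ) := by
    rw [Nat.factorial_succ]
    push_cast
    ring
  -- the four expectations
  have hE1 : permExp (m+2) (fun σ => srv (m+2) σ ⟨0, by omega⟩ * srv (m+2) σ ⟨1, by omega⟩)
      = (Nat.factorial m : ℝ) * (0 * 0 - ((m+2:ℕ):ℝ)) / (Nat.factorial (m+2) : ℝ) := by
    unfold permExp
    congr 1
    have : (fun σ : Equiv.Perm (Fin (m+2)) =>
        srv (m+2) σ ⟨0, by omega⟩ * srv (m+2) σ ⟨1, by omega⟩)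
        = fun σ => w (σ 0) * w (σ 1) := by
      funext σ; rw [hsrv, hsrv, hidx0, hidx1]
    rw [this, pair_sum_eval m w w, hsw,
      show ∑ a : Fin (m+2), w a * w a = ∑ a : Fin (m+2), w a ^ 2 from
        Finset.sum_congr rfl fun a _ => (pow_two (w a)).symm, hW2]
  have hE2 : permExp (m+2) (fun σ =>
        (srv (m+2) σ ⟨0, by omega⟩ * srv (m+2) σ ⟨1, by omega⟩)^2)
      = (Nat.factorial m : ℝ) * (((m+2:ℕ):ℝ) * ((m+2:ℕ):ℝ) - W4)
          / (Nat.factorial (m+2) : ℝ) := by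
    unfold permExp
    congr 1
    have : (fun σ : Equiv.Perm (Fin (m+2)) =>
        (srv (m+2) σ ⟨0, by omega⟩ * srv (m+2) σ ⟨1, by omega⟩)^2)
        = fun σ => (w (σ 0))^2 * (w (σ 1))^2 := by
      funext σ; rw [hsrv, hsrv, hidx0, hidx1, mul_pow]
    rw [this, pair_sum_eval m (fun k => w k ^2) (fun k => w k^2), hW2]
    congr 2
    rw [hW4]
    exact Finset.sum_congr rfl fun k _ => by ring
  have hE3 : permExp (m+2) (fun σ => (srv (m+2) σ ⟨0, by omega⟩)^2)
      = (Nat.factorial (m+1) : ℝ) * ((m+2:ℕ):ℝ) / (Nat.factorial (m+2) : ℝ) := by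
    unfold permExp
    congr 1
    have : (fun σ : Equiv.Perm (Fin (m+2)) => (srv (m+2) σ ⟨0, by omega⟩)^2)
        = fun σ => (w (σ 0))^2 := by
      funext σ; rw [hsrv, hidx0]
    rw [this, sum_perm_single (m+1) (fun k => w k ^ 2), hW2]
  have hE4 : permExp (m+2) (fun σ => ((srv (m+2) σ ⟨0, by omega⟩)^2)^2)
      = (Nat.factorial (m+1) : ℝ) * W4 / (Nat.factorial (m+2) : ℝ) := by
    unfold permExp
    congr 1
    have : (fun σ : Equiv.Perm (Fin (m+2)) => ((srv (m+2) σ ⟨0, by omega⟩)^2)^2)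
        = fun σ => (w (σ 0))^4 := by
      funext σ; rw [hsrv, hidx0]; ring
    rw [this, sum_perm_single (m+1) (fun k => w k ^ 4), hW4]
  rw [permVar_eq, permVar_eq, hE1, hE2, hE3, hE4, hf2, hf1]
  push_cast
  have hm' : ((m:ℝ) + 2) - 1 ≠ 0 := by push_cast at hK1ne; linarith [hK1ne]
  field_simp
  ring
end

section
/- For n ≥ 3, Cov(s_1 s_2, s_1 s_3) = −n/(n−1)² + (2/((n−1)(n−2)))·Var(s_1²). -/
open Finset Equiv

lemma exists_perm3 {n : ℕ} (i j k i' j' k' : Fin n)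
    (hij : i ≠ j) (hik : i ≠ k) (hjk : j ≠ k)
    (hij' : i' ≠ j') (hik' : i' ≠ k') (hjk' : j' ≠ k') :
    ∃ ρ : Equiv.Perm (Fin n), ρ i = i' ∧ ρ j = j' ∧ ρ k = k' := by
  classical
  obtain ⟨j1, hj1⟩ : ∃ j1, Equiv.swap i i' j1 = j' := ⟨Equiv.swap i i' j', Equiv.swap_apply_self _ _ _⟩
  obtain ⟨k1, hk1⟩ : ∃ k1, Equiv.swap i i' k1 = k' := ⟨Equiv.swap i i' k', Equiv.swap_apply_self _ _ _⟩
  have h1 : Equiv.swap i i' i = i' := Equiv.swap_apply_left i i'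
  have hj1i : j1 ≠ i := by intro h; rw [h, h1] at hj1; exact hij' hj1
  have hk1i : k1 ≠ i := by intro h; rw [h, h1] at hk1; exact hik' hk1
  have hk1j1 : k1 ≠ j1 := by intro h; rw [h, hj1] at hk1; exact hjk' hk1
  obtain ⟨k2, hk2⟩ : ∃ k2, Equiv.swap j j1 k2 = k1 := ⟨Equiv.swap j j1 k1, Equiv.swap_apply_self _ _ _⟩
  have hk2j : k2 ≠ j := by
    intro h; apply hk1j1
    rw [← hk2, h, Equiv.swap_apply_left]
  have hk2i : k2 ≠ i := by
    intro h; apply hk1i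
    rw [← hk2, h, Equiv.swap_apply_of_ne_of_ne hij (Ne.symm hj1i)]
  refine ⟨Equiv.swap i i' * Equiv.swap j j1 * Equiv.swap k k2, ?_, ?_, ?_⟩
  · simp only [Equiv.Perm.mul_apply]
    rw [Equiv.swap_apply_of_ne_of_ne hik (Ne.symm hk2i),
        Equiv.swap_apply_of_ne_of_ne hij (Ne.symm hj1i), h1]
  · simp only [Equiv.Perm.mul_apply]
    rw [Equiv.swap_apply_of_ne_of_ne hjk (Ne.symm hk2j), Equiv.swap_apply_left, hj1]
  · simp only [Equiv.Perm.mul_apply]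
    rw [Equiv.swap_apply_left, hk2, hk1]

noncomputable def N3 (n : ℕ) (F : Fin n → Fin n → Fin n → ℝ) : ℝ :=
  ∑ a : Fin n, ∑ b ∈ Finset.univ.erase a, ∑ c ∈ (Finset.univ.erase a).erase b, F a b c

lemma N3_comp (n : ℕ) (F : Fin n → Fin n → Fin n → ℝ) (σ : Equiv.Perm (Fin n)) :
    N3 n (fun a b c => F (σ a) (σ b) (σ c)) = N3 n F := by
  classical
  unfold N3
  rw [← Equiv.sum_comp σ (fun a => ∑ b ∈ Finset.univ.erase a,
      ∑ c ∈ (Finset.univ.erase a).erase b, F a b c)]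
  refine Finset.sum_congr rfl fun a _ => ?_
  have h1 : Finset.univ.erase (σ a) = (Finset.univ.erase a).image σ := by
    rw [Finset.image_erase σ.injective, Finset.image_univ_equiv]
  rw [h1, Finset.sum_image (fun x _ y _ h => σ.injective h)]
  refine Finset.sum_congr rfl fun b _ => ?_
  have h2 : (Finset.image σ (Finset.univ.erase a)).erase (σ b) = ((Finset.univ.erase a).erase b).image σ :=
    (Finset.image_erase σ.injective _ b).symm
  rw [h2, Finset.sum_image (fun x _ y _ h => σ.injective h)]

lemma N3_const {n : ℕ} (hn : 3 ≤ n) (C : ℝ) :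
    N3 n (fun _ _ _ => C) = (n : ℝ) * ((n : ℝ) - 1) * ((n : ℝ) - 2) * C := by
  classical
  unfold N3
  have hc1 : ∀ a : Fin n, (Finset.univ.erase a).card = n - 1 := by
    intro a
    rw [Finset.card_erase_of_mem (Finset.mem_univ a), Finset.card_univ, Fintype.card_fin]
  have hc2 : ∀ (a b : Fin n), b ∈ Finset.univ.erase a →
      ((Finset.univ.erase a).erase b).card = n - 2 := by
    intro a b hb
    rw [Finset.card_erase_of_mem hb, hc1 a]
    omega
  have inner : ∀ (a b : Fin n), b ∈ Finset.univ.erase a →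
      (∑ _c ∈ (Finset.univ.erase a).erase b, C) = ((n : ℝ) - 2) * C := by
    intro a b hb
    rw [Finset.sum_const, hc2 a b hb, nsmul_eq_mul, Nat.cast_sub (by omega : 2 ≤ n)]
    push_cast; ring
  have step : ∀ a : Fin n,
      (∑ b ∈ Finset.univ.erase a, ∑ _c ∈ (Finset.univ.erase a).erase b, C)
        = ((n : ℝ) - 1) * (((n : ℝ) - 2) * C) := by
    intro a
    rw [Finset.sum_congr rfl (inner a), Finset.sum_const, hc1 a, nsmul_eq_mul,
      Nat.cast_sub (by omega : 1 ≤ n)]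
    push_cast; ring
  rw [Finset.sum_congr rfl (fun a _ => step a), Finset.sum_const, Finset.card_univ,
    Fintype.card_fin, nsmul_eq_mul]
  ring

lemma master {n : ℕ} (hn : 3 ≤ n) (h0 : 0 < n) (h1 : 1 < n) (h2 : 2 < n)
    (F : Fin n → Fin n → Fin n → ℝ) :
    permExp n (fun σ => F (σ ⟨0, h0⟩) (σ ⟨1, h1⟩) (σ ⟨2, h2⟩))
      = N3 n F / ((n : ℝ) * ((n : ℝ) - 1) * ((n : ℝ) - 2)) := by
  classical
  set o0 : Fin n := ⟨0, h0⟩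
  set o1 : Fin n := ⟨1, h1⟩
  set o2 : Fin n := ⟨2, h2⟩
  have h01 : o0 ≠ o1 := by simp [o0, o1, Fin.ext_iff]
  have h02 : o0 ≠ o2 := by simp [o0, o2, Fin.ext_iff]
  have h12 : o1 ≠ o2 := by simp [o1, o2, Fin.ext_iff]
  set C := ∑ σ : Equiv.Perm (Fin n), F (σ o0) (σ o1) (σ o2) with hC
  -- key counting identity
  have key : (Nat.factorial n : ℝ) * N3 n F = (n : ℝ) * ((n : ℝ) - 1) * ((n : ℝ) - 2) * C := by
    have e1 : (Nat.factorial n : ℝ) * N3 n F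
        = ∑ σ : Equiv.Perm (Fin n), N3 n (fun a b c => F (σ a) (σ b) (σ c)) := by
      rw [Finset.sum_congr rfl (fun σ _ => N3_comp n F σ), Finset.sum_const, Finset.card_univ,
        Fintype.card_perm, Fintype.card_fin, nsmul_eq_mul]
    have e2 : ∑ σ : Equiv.Perm (Fin n), N3 n (fun a b c => F (σ a) (σ b) (σ c))
        = N3 n (fun i j k => ∑ σ : Equiv.Perm (Fin n), F (σ i) (σ j) (σ k)) := by
      unfold N3
      rw [Finset.sum_comm]
      refine Finset.sum_congr rfl fun a _ => ?_
      rw [Finset.sum_comm]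
      refine Finset.sum_congr rfl fun b _ => ?_
      rw [Finset.sum_comm]
    have e3 : N3 n (fun i j k => ∑ σ : Equiv.Perm (Fin n), F (σ i) (σ j) (σ k))
        = N3 n (fun _ _ _ => C) := by
      unfold N3
      refine Finset.sum_congr rfl fun i _ => ?_
      refine Finset.sum_congr rfl fun j hj => ?_
      refine Finset.sum_congr rfl fun k hk => ?_
      have hij : i ≠ j := (Finset.ne_of_mem_erase hj).symm
      have hjk : j ≠ k := (Finset.ne_of_mem_erase hk).symm
      have hik : i ≠ k := (Finset.ne_of_mem_erase (Finset.mem_of_mem_erase hk)).symm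
      obtain ⟨ρ, hρ0, hρ1, hρ2⟩ := exists_perm3 o0 o1 o2 i j k h01 h02 h12 hij hik hjk
      rw [hC]
      rw [← Equiv.sum_comp (Equiv.mulRight ρ) (fun σ => F (σ o0) (σ o1) (σ o2))]
      refine Finset.sum_congr rfl fun σ _ => ?_
      simp [Equiv.Perm.mul_apply, hρ0, hρ1, hρ2]
    rw [e1, e2, e3, N3_const hn]
  have hD : (n : ℝ) * ((n : ℝ) - 1) * ((n : ℝ) - 2) ≠ 0 := by
    have : (3 : ℝ) ≤ (n : ℝ) := by exact_mod_cast hn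
    intro h
    rcases mul_eq_zero.mp h with h' | h'
    · rcases mul_eq_zero.mp h' with h'' | h'' <;> nlinarith
    · nlinarith
  have hfac : (Nat.factorial n : ℝ) ≠ 0 := Nat.cast_ne_zero.mpr (Nat.factorial_ne_zero n)
  unfold permExp
  rw [div_eq_div_iff hfac hD]
  show C * _ = _
  linarith [key]


lemma N3_prod {n : ℕ} (u v w : Fin n → ℝ) :
    N3 n (fun a b c => u a * v b * w c)
      = (∑ a, u a) * (∑ a, v a) * (∑ a, w a)
        - (∑ a, u a * v a) * (∑ a, w a)
        - (∑ a, u a * w a) * (∑ a, v a)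
        - (∑ a, u a) * (∑ a, v a * w a)
        + 2 * ∑ a, u a * v a * w a := by
  classical
  set U := ∑ a, u a
  set V := ∑ a, v a
  set W := ∑ a, w a
  set VW := ∑ a, v a * w a
  have hw : ∀ a b : Fin n, b ∈ Finset.univ.erase a →
      (∑ c ∈ (Finset.univ.erase a).erase b, w c) = W - w a - w b := by
    intro a b hb
    rw [Finset.sum_erase_eq_sub hb, Finset.sum_erase_eq_sub (Finset.mem_univ a)]
  have h1 : ∀ (a b : Fin n), b ∈ Finset.univ.erase a →
      (∑ c ∈ (Finset.univ.erase a).erase b, u a * v b * w c)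
        = u a * (v b * (W - w a) - v b * w b) := by
    intro a b hb
    rw [← Finset.mul_sum, hw a b hb]
    ring
  have hmid : ∀ a : Fin n,
      (∑ b ∈ Finset.univ.erase a, ∑ c ∈ (Finset.univ.erase a).erase b, u a * v b * w c)
        = u a * ((V - v a) * (W - w a) - (VW - v a * w a)) := by
    intro a
    rw [Finset.sum_congr rfl (h1 a), ← Finset.mul_sum, Finset.sum_sub_distrib,
      ← Finset.sum_mul, Finset.sum_erase_eq_sub (Finset.mem_univ a),
      Finset.sum_erase_eq_sub (Finset.mem_univ a)]
  have houter : ∀ a : Fin n,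
      u a * ((V - v a) * (W - w a) - (VW - v a * w a))
        = u a * (V * W - VW) - u a * v a * W - u a * w a * V + 2 * (u a * v a * w a) := by
    intro a; ring
  unfold N3
  rw [Finset.sum_congr rfl (fun a _ => hmid a), Finset.sum_congr rfl (fun a _ => houter a),
    Finset.sum_add_distrib, Finset.sum_sub_distrib, Finset.sum_sub_distrib,
    ← Finset.sum_mul, ← Finset.sum_mul, ← Finset.sum_mul, ← Finset.mul_sum]
  ring

noncomputable def Xf (n : ℕ) (j : Fin n) : ℝ :=
  Real.sqrt (12 / ((n : ℝ) ^ 2 - 1)) * (((j : ℕ) : ℝ) + 1 - ((n : ℝ) + 1) / 2)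

lemma sr1 (n : ℕ) : ∑ i ∈ Finset.range n, ((i : ℕ) : ℝ) = (n : ℝ) * ((n : ℝ) - 1) / 2 := by
  induction n with
  | zero => simp
  | succ m ih =>
    rw [Finset.sum_range_succ, ih]
    push_cast
    ring

lemma sr2 (n : ℕ) : ∑ i ∈ Finset.range n, ((i : ℕ) : ℝ) ^ 2
    = (n : ℝ) * ((n : ℝ) - 1) * (2 * (n : ℝ) - 1) / 6 := by
  induction n with
  | zero => simp
  | succ m ih =>
    rw [Finset.sum_range_succ, ih]
    push_cast
    ring

lemma sumX (n : ℕ) : ∑ j : Fin n, Xf n j = 0 := by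
  unfold Xf
  rw [← Finset.mul_sum]
  have : ∑ j : Fin n, (((j : ℕ) : ℝ) + 1 - ((n : ℝ) + 1) / 2) = 0 := by
    rw [Fin.sum_univ_eq_sum_range (fun i => (((i : ℕ) : ℝ) + 1 - ((n : ℝ) + 1) / 2))]
    have expand : ∀ i ∈ Finset.range n, (((i : ℕ) : ℝ) + 1 - ((n : ℝ) + 1) / 2)
        = ((i : ℕ) : ℝ) + (1 - ((n : ℝ) + 1) / 2) := fun i _ => by ring
    rw [Finset.sum_congr rfl expand, Finset.sum_add_distrib, sr1, Finset.sum_const,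
      Finset.card_range, nsmul_eq_mul]
    ring
  rw [this, mul_zero]

lemma sumX2 {n : ℕ} (hn : 3 ≤ n) : ∑ j : Fin n, (Xf n j) ^ 2 = (n : ℝ) := by
  have hn3 : (3 : ℝ) ≤ (n : ℝ) := by exact_mod_cast hn
  have hpos : (0 : ℝ) < (n : ℝ) ^ 2 - 1 := by nlinarith
  have hsq : Real.sqrt (12 / ((n : ℝ) ^ 2 - 1)) ^ 2 = 12 / ((n : ℝ) ^ 2 - 1) :=
    Real.sq_sqrt (by positivity)
  unfold Xf
  have expand : ∀ j : Fin n,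
      (Real.sqrt (12 / ((n : ℝ) ^ 2 - 1)) * (((j : ℕ) : ℝ) + 1 - ((n : ℝ) + 1) / 2)) ^ 2
        = 12 / ((n : ℝ) ^ 2 - 1) * ((((j : ℕ) : ℝ) + 1 - ((n : ℝ) + 1) / 2) ^ 2) := by
    intro j
    rw [mul_pow, hsq]
  rw [Finset.sum_congr rfl (fun j _ => expand j), ← Finset.mul_sum]
  have key : ∑ j : Fin n, ((((j : ℕ) : ℝ) + 1 - ((n : ℝ) + 1) / 2) ^ 2)
      = (n : ℝ) * ((n : ℝ) ^ 2 - 1) / 12 := by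
    rw [Fin.sum_univ_eq_sum_range (fun i => ((((i : ℕ) : ℝ) + 1 - ((n : ℝ) + 1) / 2) ^ 2))]
    have expand2 : ∀ i ∈ Finset.range n, ((((i : ℕ) : ℝ) + 1 - ((n : ℝ) + 1) / 2) ^ 2)
        = ((i : ℕ) : ℝ) ^ 2 + (2 - ((n : ℝ) + 1)) * ((i : ℕ) : ℝ)
          + (1 - ((n : ℝ) + 1) / 2) ^ 2 := fun i _ => by ring
    rw [Finset.sum_congr rfl expand2, Finset.sum_add_distrib, Finset.sum_add_distrib,
      sr2, ← Finset.mul_sum, sr1, Finset.sum_const, Finset.card_range, nsmul_eq_mul]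
    ring
  rw [key]
  field_simp

lemma permCov_eq (n : ℕ) (f g : Equiv.Perm (Fin n) → ℝ) :
    permCov n f g = permExp n (fun σ => f σ * g σ) - permExp n f * permExp n g := by
  have hfac : ((Nat.factorial n : ℕ) : ℝ) ≠ 0 := Nat.cast_ne_zero.mpr (Nat.factorial_ne_zero n)
  have hcard : (Fintype.card (Equiv.Perm (Fin n)) : ℝ) = (Nat.factorial n : ℝ) := by
    rw [Fintype.card_perm, Fintype.card_fin]
  unfold permCov permExp
  set A := ∑ σ : Equiv.Perm (Fin n), f σ
  set B := ∑ σ : Equiv.Perm (Fin n), g σ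
  have : ∑ σ : Equiv.Perm (Fin n), (f σ - A / (Nat.factorial n : ℝ)) * (g σ - B / (Nat.factorial n : ℝ))
      = (∑ σ : Equiv.Perm (Fin n), f σ * g σ)
        - A / (Nat.factorial n : ℝ) * B - B / (Nat.factorial n : ℝ) * A
        + (Nat.factorial n : ℝ) * (A / (Nat.factorial n : ℝ) * (B / (Nat.factorial n : ℝ))) := by
    have expand : ∀ σ : Equiv.Perm (Fin n),
        (f σ - A / (Nat.factorial n : ℝ)) * (g σ - B / (Nat.factorial n : ℝ))
          = f σ * g σ - A / (Nat.factorial n : ℝ) * g σ - B / (Nat.factorial n : ℝ) * f σ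
            + A / (Nat.factorial n : ℝ) * (B / (Nat.factorial n : ℝ)) := by
      intro σ; ring
    rw [Finset.sum_congr rfl (fun σ _ => expand σ)]
    rw [Finset.sum_add_distrib, Finset.sum_sub_distrib, Finset.sum_sub_distrib,
        ← Finset.mul_sum, ← Finset.mul_sum, Finset.sum_const, Finset.card_univ, nsmul_eq_mul, hcard]
  rw [this]
  field_simp
  ring

/-- For `n ≥ 3`,
`Cov(s₁s₂, s₁s₃) = −n/(n−1)² + (2/((n−1)(n−2)))·Var(s₁²)`. -/
theorem cov_srv_prod_overlap (n : ℕ) (hn : 3 ≤ n) :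
    permCov n (fun σ => srv n σ ⟨0, by omega⟩ * srv n σ ⟨1, by omega⟩)
        (fun σ => srv n σ ⟨0, by omega⟩ * srv n σ ⟨2, by omega⟩)
      = -(n : ℝ) / ((n : ℝ) - 1) ^ 2
        + (2 / (((n : ℝ) - 1) * ((n : ℝ) - 2)))
            * permVar n (fun σ => (srv n σ ⟨0, by omega⟩) ^ 2) := by
  classical
  have h0 : 0 < n := by omega
  have h1 : 1 < n := by omega
  have h2 : 2 < n := by omega
  have h3 : (3 : ℝ) ≤ (n : ℝ) := by exact_mod_cast hn
  have hn0 : (n : ℝ) ≠ 0 := by intro h; nlinarith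
  have hn1 : (n : ℝ) - 1 ≠ 0 := by intro h; nlinarith
  have hn2 : (n : ℝ) - 2 ≠ 0 := by intro h; nlinarith
  have hS1 : ∑ a : Fin n, Xf n a = 0 := sumX n
  have hS2 : ∑ a : Fin n, Xf n a ^ 2 = (n : ℝ) := sumX2 hn
  have hSone : ∑ _a : Fin n, (1 : ℝ) = (n : ℝ) := by
    rw [Finset.sum_const, Finset.card_univ, Fintype.card_fin, nsmul_eq_mul, mul_one]
  have hXX : ∑ a : Fin n, Xf n a * Xf n a = (n : ℝ) := by
    rw [← hS2]; exact Finset.sum_congr rfl fun a _ => by ring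
  set S3 : ℝ := ∑ a : Fin n, Xf n a * Xf n a * Xf n a with hS3def
  set S4 : ℝ := ∑ a : Fin n, Xf n a * Xf n a * Xf n a * Xf n a with hS4def
  set D : ℝ := (n : ℝ) * ((n : ℝ) - 1) * ((n : ℝ) - 2) with hDdef
  -- value computations for the N3 sums
  have vA : N3 n (fun a _b _c => Xf n a ^ 2)
      = (n : ℝ) * (n : ℝ) * (n : ℝ) - 3 * ((n : ℝ) * (n : ℝ)) + 2 * (n : ℝ) := by
    have h := N3_prod (fun x : Fin n => Xf n x ^ 2) (fun _ => (1 : ℝ)) (fun _ => (1 : ℝ))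
    simp only [mul_one, one_mul] at h
    rw [h, hS2, hSone]; ring
  have vA2 : N3 n (fun a _b _c => Xf n a ^ 2 * Xf n a ^ 2)
      = S4 * ((n : ℝ) * (n : ℝ)) - 3 * (S4 * (n : ℝ)) + 2 * S4 := by
    have h := N3_prod (fun x : Fin n => Xf n x ^ 2 * Xf n x ^ 2) (fun _ => (1 : ℝ))
      (fun _ => (1 : ℝ))
    simp only [mul_one, one_mul] at h
    have hc : ∑ a : Fin n, Xf n a ^ 2 * Xf n a ^ 2 = S4 := by
      rw [hS4def]; exact Finset.sum_congr rfl fun a _ => by ring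
    rw [h, hc, hSone]; ring
  have vB : N3 n (fun a b _c => Xf n a * Xf n b) = 2 * (n : ℝ) - (n : ℝ) * (n : ℝ) := by
    have h := N3_prod (Xf n) (Xf n) (fun _ : Fin n => (1 : ℝ))
    simp only [mul_one] at h
    rw [h, hS1, hSone, hXX]; ring
  have vC : N3 n (fun a _b c => Xf n a * Xf n c) = 2 * (n : ℝ) - (n : ℝ) * (n : ℝ) := by
    have h := N3_prod (Xf n) (fun _ : Fin n => (1 : ℝ)) (Xf n)
    simp only [mul_one, one_mul] at h
    rw [h, hS1, hSone, hXX]; ring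
  have vD : N3 n (fun a b c => Xf n a * Xf n b * (Xf n a * Xf n c))
      = 2 * S4 - (n : ℝ) * (n : ℝ) := by
    have h := N3_prod (fun x : Fin n => Xf n x * Xf n x) (Xf n) (Xf n)
    have hcongr : N3 n (fun a b c => Xf n a * Xf n b * (Xf n a * Xf n c))
        = N3 n (fun a b c => Xf n a * Xf n a * Xf n b * Xf n c) :=
      congrArg (N3 n) (by funext a b c; ring)
    have hc3 : ∑ a : Fin n, Xf n a * Xf n a * Xf n a = S3 := rfl
    have hc4 : ∑ a : Fin n, Xf n a * Xf n a * Xf n a * Xf n a = S4 := rfl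
    rw [hcongr, h, hS1, hXX, hc3, hc4]; ring
  -- expectations via the master formula
  have m1 : permExp n (fun σ => Xf n (σ ⟨0, h0⟩) * Xf n (σ ⟨1, h1⟩)
        * (Xf n (σ ⟨0, h0⟩) * Xf n (σ ⟨2, h2⟩)))
      = N3 n (fun a b c => Xf n a * Xf n b * (Xf n a * Xf n c)) / D :=
    master hn h0 h1 h2 (fun a b c => Xf n a * Xf n b * (Xf n a * Xf n c))
  have m2 : permExp n (fun σ => Xf n (σ ⟨0, h0⟩) * Xf n (σ ⟨1, h1⟩))
      = N3 n (fun a b _c => Xf n a * Xf n b) / D :=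
    master hn h0 h1 h2 (fun a b _c => Xf n a * Xf n b)
  have m3 : permExp n (fun σ => Xf n (σ ⟨0, h0⟩) * Xf n (σ ⟨2, h2⟩))
      = N3 n (fun a _b c => Xf n a * Xf n c) / D :=
    master hn h0 h1 h2 (fun a _b c => Xf n a * Xf n c)
  have m4 : permExp n (fun σ => Xf n (σ ⟨0, h0⟩) ^ 2)
      = N3 n (fun a _b _c => Xf n a ^ 2) / D :=
    master hn h0 h1 h2 (fun a _b _c => Xf n a ^ 2)
  have m5 : permExp n (fun σ => Xf n (σ ⟨0, h0⟩) ^ 2 * Xf n (σ ⟨0, h0⟩) ^ 2)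
      = N3 n (fun a _b _c => Xf n a ^ 2 * Xf n a ^ 2) / D :=
    master hn h0 h1 h2 (fun a _b _c => Xf n a ^ 2 * Xf n a ^ 2)
  show permCov n (fun σ => Xf n (σ ⟨0, h0⟩) * Xf n (σ ⟨1, h1⟩))
        (fun σ => Xf n (σ ⟨0, h0⟩) * Xf n (σ ⟨2, h2⟩))
      = -(n : ℝ) / ((n : ℝ) - 1) ^ 2
        + (2 / (((n : ℝ) - 1) * ((n : ℝ) - 2)))
            * permVar n (fun σ => Xf n (σ ⟨0, h0⟩) ^ 2)
  unfold permVar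
  rw [permCov_eq, permCov_eq]
  rw [m1, m2, m3, m4, m5, vA, vA2, vB, vC, vD]
  rw [hDdef]
  field_simp
  ring
end
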